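/- arXiv:2012.06818 — 2 statements merged into one kernel-verified Lean document; each statement's English description precedes it below -/
import Mathlib

section
/- Let (r,v) : I → H² × dS² be a spacelike Legendre curve with spacelike hyperbolic Legendre curvature (ℓ,m), write ν = v and μ = r∧v, and let s₀ ∈ I. Suppose ℓ has an A_{k−1}-type singularity at s₀ for some k ≥ 0. Then for every j ≥ 1 there exist a neighborhood U of s₀ in I and smooth functions b₀,…,b_{j−1} : U → ℝ such that ⟨ν^{(j+1)}(s), μ(s)⟩ − m^{(j)}(s) = Σ_{i=0}^{j−1} b_i(s)·m^{(i)}(s) for all s ∈ U; i.e., ⟨ν^{(j+1)}, μ⟩ ≡ m^{(j)} modulo the ideal of smooth function germs at s₀ generated by the germs of m, m', …, m^{(j−1)}. -/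
noncomputable section

/-- The Minkowski pseudo scalar product on `ℝ³₁`. -/
def mdot (u w : Fin 3 → ℝ) : ℝ := -(u 0 * w 0) + u 1 * w 1 + u 2 * w 2

/-- The Minkowski pseudo vector product on `ℝ³₁`. -/
def mcross (u w : Fin 3 → ℝ) : Fin 3 → ℝ :=
  ![-(u 1 * w 2) + u 2 * w 1, u 2 * w 0 - u 0 * w 2, -(u 1 * w 0) + u 0 * w 1]

/-- Hyperbolic 2-space. -/
def H2 : Set (Fin 3 → ℝ) := {u | mdot u u = -1}

/-- Upper branch of hyperbolic 2-space. -/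
def H2plus : Set (Fin 3 → ℝ) := {u | mdot u u = -1 ∧ 0 < u 0}

/-- de Sitter 2-space. -/
def dS2 : Set (Fin 3 → ℝ) := {u | mdot u u = 1}

/-- A spacelike Legendre curve `(r, v)` on the open interval `I`. -/
def IsSLegendre (I : Set ℝ) (r v : ℝ → Fin 3 → ℝ) : Prop :=
  ContDiffOn ℝ (⊤ : ℕ∞) r I ∧ ContDiffOn ℝ (⊤ : ℕ∞) v I ∧
  (∀ s ∈ I, r s ∈ H2) ∧ (∀ s ∈ I, v s ∈ dS2) ∧
  (∀ s ∈ I, mdot (r s) (v s) = 0) ∧ (∀ s ∈ I, mdot (deriv r s) (v s) = 0)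

/-- `μ = r ∧ v`. -/
def muc (r v : ℝ → Fin 3 → ℝ) : ℝ → Fin 3 → ℝ := fun s => mcross (r s) (v s)

/-- First Legendre curvature `ℓ = ⟨r', μ⟩`. -/
def ellc (r v : ℝ → Fin 3 → ℝ) : ℝ → ℝ := fun s => mdot (deriv r s) (muc r v s)

/-- Second Legendre curvature `m = ⟨v', μ⟩`. -/
def mc (r v : ℝ → Fin 3 → ℝ) : ℝ → ℝ := fun s => mdot (deriv v s) (muc r v s)

/-- Hyperbolic pedal curve relative to `Q` of a frontal with dual curve `v`. -/
def Ped (Q : Fin 3 → ℝ) (v : ℝ → Fin 3 → ℝ) (s : ℝ) : Fin 3 → ℝ :=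
  (Real.sqrt (1 + (mdot Q (v s)) ^ 2))⁻¹ • (Q - mdot Q (v s) • v s)

/-- Hyperbolic orthotomic curve relative to `Q` of a frontal with dual curve `v`. -/
def Ort (Q : Fin 3 → ℝ) (v : ℝ → Fin 3 → ℝ) (s : ℝ) : Fin 3 → ℝ :=
  Q - (2 * mdot Q (v s)) • v s

/-- The standard global chart of `H²₊`. -/
def qchart (x : Fin 3 → ℝ) : ℝ × ℝ := (x 1, x 2)

/-- `f` has an `A_{k-1}`-type singularity at `s₀` (for `k = 0` this means `f s₀ ≠ 0`,
i.e. an `A_{-1}`-type singularity). -/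
def AkSingPred (f : ℝ → ℝ) (k : ℕ) (s₀ : ℝ) : Prop :=
  (∀ i < k, iteratedDeriv i f s₀ = 0) ∧ iteratedDeriv k f s₀ ≠ 0

/-- `ψ` is a germ of a `C^n` diffeomorphism at `x`. -/
def IsLocalCnDiffeoAt (n : ℕ∞) {E F : Type*} [NormedAddCommGroup E] [NormedSpace ℝ E]
    [NormedAddCommGroup F] [NormedSpace ℝ F] (ψ : E → F) (x : E) : Prop :=
  ∃ (U : Set E) (V : Set F) (ψinv : F → E), IsOpen U ∧ x ∈ U ∧ IsOpen V ∧ ψ x ∈ V ∧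
    ContDiffOn ℝ n ψ U ∧ ContDiffOn ℝ n ψinv V ∧ Set.MapsTo ψ U V ∧ Set.MapsTo ψinv V U ∧
    (∀ y ∈ U, ψinv (ψ y) = y) ∧ (∀ z ∈ V, ψ (ψinv z) = z)

/-- The plane curve germ of `f` at `s₀` is `C^n` `𝒜`-equivalent to the germ of `g` at `t₀`. -/
def CnAEquiv (n : ℕ∞) (f : ℝ → ℝ × ℝ) (s₀ : ℝ) (g : ℝ → ℝ × ℝ) (t₀ : ℝ) : Prop :=
  ∃ (φ : ℝ → ℝ) (Ψ : ℝ × ℝ → ℝ × ℝ),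
    IsLocalCnDiffeoAt n φ s₀ ∧ φ s₀ = t₀ ∧
    IsLocalCnDiffeoAt n Ψ (f s₀) ∧ Ψ (f s₀) = g t₀ ∧
    ∀ᶠ s in nhds s₀, g (φ s) = Ψ (f s)

/-- The plane curve germ of `f` at `s₀` is `C^n` `ℒ`-equivalent to the germ of `g` at `s₀`. -/
def CnLEquiv (n : ℕ∞) (f : ℝ → ℝ × ℝ) (s₀ : ℝ) (g : ℝ → ℝ × ℝ) : Prop :=
  ∃ Ψ : ℝ × ℝ → ℝ × ℝ,
    IsLocalCnDiffeoAt n Ψ (f s₀) ∧ Ψ (f s₀) = g s₀ ∧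
    ∀ᶠ s in nhds s₀, g s = Ψ (f s)

end

section Aux

open Topology Filter Set Finset

private lemma mdot_smul_left' (c : ℝ) (u w : Fin 3 → ℝ) : mdot (c • u) w = c * mdot u w := by
  simp [mdot]; ring

private lemma mdot_add_left' (u u' w : Fin 3 → ℝ) : mdot (u + u') w = mdot u w + mdot u' w := by
  simp [mdot]; ring

private lemma mdot_sum_left' {ι : Type*} (t : Finset ι) (f : ι → Fin 3 → ℝ) (w : Fin 3 → ℝ) :
    mdot (∑ i ∈ t, f i) w = ∑ i ∈ t, mdot (f i) w := by
  classical
  induction t using Finset.induction_on with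
  | empty => simp [mdot]
  | insert _ _ h ih => rw [Finset.sum_insert h, Finset.sum_insert h, mdot_add_left', ih]

private lemma mdot_mcross_self' {r v : Fin 3 → ℝ} (h1 : mdot r r = -1) (h2 : mdot v v = 1)
    (h3 : mdot r v = 0) : mdot (mcross r v) (mcross r v) = 1 := by
  simp only [mdot, mcross, Matrix.cons_val_zero, Matrix.cons_val_one, Matrix.head_cons,
    Matrix.cons_val_two, Matrix.tail_cons] at *
  linear_combination (-(r 0 * v 0) + r 1 * v 1 + r 2 * v 2) * h3
    - (-(v 0 * v 0) + v 1 * v 1 + v 2 * v 2) * h1 + h2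

private lemma expand_key' {r v x : Fin 3 → ℝ} (h1 : mdot r r = -1) (h2 : mdot v v = 1)
    (h3 : mdot r v = 0) (h4 : mdot x r = 0) (h5 : mdot x v = 0) :
    x = mdot x (mcross r v) • mcross r v := by
  simp only [mdot, mcross, Matrix.cons_val_zero, Matrix.cons_val_one, Matrix.head_cons,
    Matrix.cons_val_two, Matrix.tail_cons] at h1 h2 h3 h4 h5
  funext l
  fin_cases l
  · show x 0 = (mdot x (mcross r v) • mcross r v) 0
    simp only [Pi.smul_apply, smul_eq_mul, mdot, mcross, Matrix.cons_val_zero,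
      Matrix.cons_val_one, Matrix.head_cons, Matrix.cons_val_two, Matrix.tail_cons]
    linear_combination (x 0 * (-(v 0 * v 0) + v 1 * v 1 + v 2 * v 2)) * h1 - x 0 * h2
      - (x 0 * (-(r 0 * v 0) + r 1 * v 1 + r 2 * v 2)) * h3
      - (-((r 2 * v 0 - r 0 * v 2) * v 2) + (-(r 1 * v 0) + r 0 * v 1) * v 1) * h4
      + (-((r 2 * v 0 - r 0 * v 2) * r 2) + (-(r 1 * v 0) + r 0 * v 1) * r 1) * h5
  · show x 1 = (mdot x (mcross r v) • mcross r v) 1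
    simp only [Pi.smul_apply, smul_eq_mul, mdot, mcross, Matrix.cons_val_zero,
      Matrix.cons_val_one, Matrix.head_cons, Matrix.cons_val_two, Matrix.tail_cons]
    linear_combination (x 1 * (-(v 0 * v 0) + v 1 * v 1 + v 2 * v 2)) * h1 - x 1 * h2
      - (x 1 * (-(r 0 * v 0) + r 1 * v 1 + r 2 * v 2)) * h3
      - ((-(r 1 * v 0) + r 0 * v 1) * v 0 - (-(r 1 * v 2) + r 2 * v 1) * v 2) * h4
      + ((-(r 1 * v 0) + r 0 * v 1) * r 0 - (-(r 1 * v 2) + r 2 * v 1) * r 2) * h5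
  · show x 2 = (mdot x (mcross r v) • mcross r v) 2
    simp only [Pi.smul_apply, smul_eq_mul, mdot, mcross, Matrix.cons_val_zero,
      Matrix.cons_val_one, Matrix.head_cons, Matrix.cons_val_two, Matrix.tail_cons]
    linear_combination (x 2 * (-(v 0 * v 0) + v 1 * v 1 + v 2 * v 2)) * h1 - x 2 * h2
      - (x 2 * (-(r 0 * v 0) + r 1 * v 1 + r 2 * v 2)) * h3
      - (-((r 2 * v 0 - r 0 * v 2) * v 0) + (-(r 1 * v 2) + r 2 * v 1) * v 1) * h4
      + (-((r 2 * v 0 - r 0 * v 2) * r 0) + (-(r 1 * v 2) + r 2 * v 1) * r 1) * h5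

private lemma hasDerivAt_comp_proj' {f : ℝ → Fin 3 → ℝ} {s : ℝ} (hf : DifferentiableAt ℝ f s)
    (i : Fin 3) : HasDerivAt (fun t => f t i) (deriv f s i) s :=
  (ContinuousLinearMap.proj (R := ℝ) (φ := fun _ : Fin 3 => ℝ) i).hasFDerivAt.comp_hasDerivAt s
    hf.hasDerivAt

private lemma hasDerivAt_mdot' {f g : ℝ → Fin 3 → ℝ} {s : ℝ} (hf : DifferentiableAt ℝ f s)
    (hg : DifferentiableAt ℝ g s) :
    HasDerivAt (fun t => mdot (f t) (g t))
      (mdot (deriv f s) (g s) + mdot (f s) (deriv g s)) s := by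
  have H := ((((hasDerivAt_comp_proj' hf 0).mul (hasDerivAt_comp_proj' hg 0)).neg).add
    ((hasDerivAt_comp_proj' hf 1).mul (hasDerivAt_comp_proj' hg 1))).add
    ((hasDerivAt_comp_proj' hf 2).mul (hasDerivAt_comp_proj' hg 2))
  simp only [mdot]
  refine H.congr_deriv ?_
  ring

private lemma contDiffOn_proj' {I : Set ℝ} {f : ℝ → Fin 3 → ℝ} (hf : ContDiffOn ℝ (⊤ : ℕ∞) f I)
    (i : Fin 3) : ContDiffOn ℝ (⊤ : ℕ∞) (fun s => f s i) I :=
  (ContinuousLinearMap.proj (R := ℝ) (φ := fun _ : Fin 3 => ℝ) i).contDiff.comp_contDiffOn hf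

private lemma contDiffOn_mdot' {I : Set ℝ} {f g : ℝ → Fin 3 → ℝ} (hf : ContDiffOn ℝ (⊤ : ℕ∞) f I)
    (hg : ContDiffOn ℝ (⊤ : ℕ∞) g I) : ContDiffOn ℝ (⊤ : ℕ∞) (fun s => mdot (f s) (g s)) I := by
  simp only [mdot]
  exact (((contDiffOn_proj' hf 0).mul (contDiffOn_proj' hg 0)).neg.add
    ((contDiffOn_proj' hf 1).mul (contDiffOn_proj' hg 1))).add
    ((contDiffOn_proj' hf 2).mul (contDiffOn_proj' hg 2))

private lemma contDiffOn_mcross' {I : Set ℝ} {f g : ℝ → Fin 3 → ℝ} (hf : ContDiffOn ℝ (⊤ : ℕ∞) f I)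
    (hg : ContDiffOn ℝ (⊤ : ℕ∞) g I) : ContDiffOn ℝ (⊤ : ℕ∞) (fun s => mcross (f s) (g s)) I := by
  rw [contDiffOn_pi]
  intro i
  fin_cases i
  · simpa [mcross] using ((contDiffOn_proj' hf 1).mul (contDiffOn_proj' hg 2)).neg.add
      ((contDiffOn_proj' hf 2).mul (contDiffOn_proj' hg 1))
  · simpa [mcross] using ((contDiffOn_proj' hf 2).mul (contDiffOn_proj' hg 0)).sub
      ((contDiffOn_proj' hf 0).mul (contDiffOn_proj' hg 2))
  · simpa [mcross] using ((contDiffOn_proj' hf 1).mul (contDiffOn_proj' hg 0)).neg.add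
      ((contDiffOn_proj' hf 0).mul (contDiffOn_proj' hg 1))

private lemma diffAt_iteratedDeriv' {E : Type*} [NormedAddCommGroup E] [NormedSpace ℝ E]
    {I : Set ℝ} (hI : IsOpen I) {f : ℝ → E} (hf : ContDiffOn ℝ (⊤ : ℕ∞) f I) (n : ℕ) :
    ∀ s ∈ I, DifferentiableAt ℝ (iteratedDeriv n f) s := by
  induction n generalizing f with
  | zero =>
    intro s hs
    simpa [iteratedDeriv_zero] using ((hf s hs).contDiffAt (hI.mem_nhds hs)).differentiableAt
      (by simp)
  | succ n ih =>
    intro s hs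
    rw [iteratedDeriv_succ']
    exact ih (hf.deriv_of_isOpen hI (by simp)) s hs

private lemma main_ind' {I : Set ℝ} (hI : IsOpen I) {v M : ℝ → Fin 3 → ℝ} {m : ℝ → ℝ}
    (hM : ContDiffOn ℝ (⊤ : ℕ∞) M I) (hm : ContDiffOn ℝ (⊤ : ℕ∞) m I)
    (hv' : ∀ s ∈ I, deriv v s = m s • M s) (j : ℕ) :
    ∃ A : ℕ → ℝ → Fin 3 → ℝ, (∀ i ≤ j, ContDiffOn ℝ (⊤ : ℕ∞) (A i) I) ∧ (∀ s ∈ I, A j s = M s) ∧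
      ∀ s ∈ I, iteratedDeriv (j + 1) v s
        = ∑ i ∈ Finset.range (j + 1), iteratedDeriv i m s • A i s := by
  induction j with
  | zero =>
    refine ⟨fun _ => M, fun _ _ => hM, fun _ _ => rfl, fun s hs => ?_⟩
    simp only [zero_add, iteratedDeriv_one, Finset.sum_range_one, iteratedDeriv_zero]
    exact hv' s hs
  | succ j IH =>
    obtain ⟨A, hA, hAj, hrec⟩ := IH
    refine ⟨fun i s => (if i = 0 then 0 else A (i - 1) s)
      + (if i ≤ j then deriv (A i) s else 0), ?_, ?_, ?_⟩
    · intro i hi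
      apply ContDiffOn.add
      · rcases Nat.eq_zero_or_pos i with h0 | h0
        · simp only [h0, if_pos]
          exact contDiffOn_const
        · have : i ≠ 0 := by omega
          simp only [this, if_neg, if_false]
          exact hA (i - 1) (by omega)
      · by_cases hij : i ≤ j
        · simp only [hij, if_true]
          exact (hA i hij).deriv_of_isOpen hI (by simp)
        · simp only [hij, if_false]
          exact contDiffOn_const
    · intro s hs
      have h1 : j + 1 ≠ 0 := Nat.succ_ne_zero j
      have h2 : ¬ (j + 1 ≤ j) := by omega
      show (if j + 1 = 0 then (0 : Fin 3 → ℝ) else A (j + 1 - 1) s)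
          + (if j + 1 ≤ j then deriv (A (j + 1)) s else 0) = M s
      rw [if_neg h1, if_neg h2, Nat.add_sub_cancel, add_zero]
      exact hAj s hs
    · intro s hs
      have hev : iteratedDeriv (j + 1) v
          =ᶠ[𝓝 s] fun t => ∑ i ∈ Finset.range (j + 1), iteratedDeriv i m t • A i t := by
        filter_upwards [hI.mem_nhds hs] with t ht
        exact hrec t ht
      have hterm : ∀ i ∈ Finset.range (j + 1),
          HasDerivAt (fun t => iteratedDeriv i m t • A i t)
            (iteratedDeriv i m s • deriv (A i) s + iteratedDeriv (i + 1) m s • A i s) s := by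
        intro i hi
        have hi' : i ≤ j := Nat.lt_succ_iff.mp (Finset.mem_range.mp hi)
        have h1 : HasDerivAt (iteratedDeriv i m) (iteratedDeriv (i + 1) m s) s := by
          rw [iteratedDeriv_succ]
          exact (diffAt_iteratedDeriv' hI hm i s hs).hasDerivAt
        have h2 : DifferentiableAt ℝ (A i) s :=
          ((hA i hi' s hs).contDiffAt (hI.mem_nhds hs)).differentiableAt (by simp)
        exact h1.smul h2.hasDerivAt
      have hD := (HasDerivAt.fun_sum hterm).deriv
      rw [iteratedDeriv_succ, hev.deriv_eq, hD]
      rw [Finset.sum_add_distrib]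
      have e1 : ∑ i ∈ Finset.range (j + 1), iteratedDeriv i m s • deriv (A i) s
          = ∑ i ∈ Finset.range (j + 2),
            iteratedDeriv i m s • (if i ≤ j then deriv (A i) s else 0) := by
        conv_rhs => rw [Finset.sum_range_succ]
        have h2 : ¬ (j + 1 ≤ j) := by omega
        rw [if_neg h2, smul_zero, add_zero]
        refine Finset.sum_congr rfl fun i hi => ?_
        rw [if_pos (Nat.lt_succ_iff.mp (Finset.mem_range.mp hi))]
      have e2 : ∑ i ∈ Finset.range (j + 1), iteratedDeriv (i + 1) m s • A i s
          = ∑ i ∈ Finset.range (j + 2),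
            iteratedDeriv i m s • (if i = 0 then 0 else A (i - 1) s) := by
        conv_rhs => rw [Finset.sum_range_succ' (fun i =>
          iteratedDeriv i m s • (if i = 0 then (0 : Fin 3 → ℝ) else A (i - 1) s)) (j + 1)]
        simp only [Nat.succ_ne_zero, if_false, Nat.add_sub_cancel, if_pos, smul_zero, add_zero]
      rw [e1, e2]
      rw [← Finset.sum_add_distrib]
      refine Finset.sum_congr rfl fun i _ => ?_
      rw [← smul_add]
      exact congrArg _ (add_comm _ _)

end Aux

theorem inner_dual_higher_deriv_mu_congruent
    (I : Set ℝ) (hI : IsOpen I) (r v : ℝ → Fin 3 → ℝ)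
    (h : IsSLegendre I r v) (s₀ : ℝ) (hs₀ : s₀ ∈ I)
    (k : ℕ) (hk : AkSingPred (ellc r v) k s₀)
    (j : ℕ) (hj : 1 ≤ j) :
    ∃ (U : Set ℝ) (b : ℕ → ℝ → ℝ), IsOpen U ∧ s₀ ∈ U ∧ U ⊆ I ∧
      (∀ i < j, ContDiffOn ℝ (⊤ : ℕ∞) (b i) U) ∧
      ∀ s ∈ U, mdot (iteratedDeriv (j + 1) v s) (muc r v s) - iteratedDeriv j (mc r v) s
        = ∑ i ∈ Finset.range j, b i s * iteratedDeriv i (mc r v) s := by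
  classical
  obtain ⟨hr, hv, hH2, hdS2, hrv, hr'v⟩ := h
  -- basic pointwise identities
  have hC1 : ∀ s ∈ I, mdot (r s) (r s) = -1 := fun s hs => hH2 s hs
  have hC2 : ∀ s ∈ I, mdot (v s) (v s) = 1 := fun s hs => hdS2 s hs
  -- differentiability
  have hrd : ∀ s ∈ I, DifferentiableAt ℝ r s := fun s hs =>
    ((hr s hs).contDiffAt (hI.mem_nhds hs)).differentiableAt (by simp)
  have hvd : ∀ s ∈ I, DifferentiableAt ℝ v s := fun s hs =>
    ((hv s hs).contDiffAt (hI.mem_nhds hs)).differentiableAt (by simp)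
  -- ⟨v', r⟩ = 0 and ⟨v', v⟩ = 0 on I
  have hdvr : ∀ s ∈ I, mdot (deriv v s) (r s) = 0 := by
    intro s hs
    have hev : (fun t => mdot (r t) (v t)) =ᶠ[nhds s] fun _ => (0 : ℝ) := by
      filter_upwards [hI.mem_nhds hs] with t ht
      exact hrv t ht
    have hd0 : deriv (fun t => mdot (r t) (v t)) s = 0 := by
      rw [hev.deriv_eq, deriv_const]
    rw [(hasDerivAt_mdot' (hrd s hs) (hvd s hs)).deriv] at hd0
    rw [hr'v s hs, zero_add] at hd0
    have : mdot (deriv v s) (r s) = mdot (r s) (deriv v s) := by simp [mdot]; ring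
    rw [this, hd0]
  have hdvv : ∀ s ∈ I, mdot (deriv v s) (v s) = 0 := by
    intro s hs
    have hev : (fun t => mdot (v t) (v t)) =ᶠ[nhds s] fun _ => (1 : ℝ) := by
      filter_upwards [hI.mem_nhds hs] with t ht
      exact hC2 t ht
    have hd0 : deriv (fun t => mdot (v t) (v t)) s = 0 := by
      rw [hev.deriv_eq, deriv_const]
    rw [(hasDerivAt_mdot' (hvd s hs) (hvd s hs)).deriv] at hd0
    have hsymm : mdot (deriv v s) (v s) = mdot (v s) (deriv v s) := by simp [mdot]; ring
    rw [hsymm] at hd0 ⊢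
    linarith [hd0]
  -- the structural equation v' = m • μ on I
  have hframe : ∀ s ∈ I, deriv v s = mc r v s • muc r v s := by
    intro s hs
    exact expand_key' (hC1 s hs) (hC2 s hs) (hrv s hs) (hdvr s hs) (hdvv s hs)
  -- smoothness
  have hdvOn : ContDiffOn ℝ (⊤ : ℕ∞) (deriv v) I := hv.deriv_of_isOpen hI (by simp)
  have hmuOn : ContDiffOn ℝ (⊤ : ℕ∞) (muc r v) I := contDiffOn_mcross' hr hv
  have hmcOn : ContDiffOn ℝ (⊤ : ℕ∞) (mc r v) I := contDiffOn_mdot' hdvOn hmuOn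
  obtain ⟨A, hA, hAj, hrec⟩ := main_ind' hI hmuOn hmcOn hframe j
  refine ⟨I, fun i s => mdot (A i s) (muc r v s), hI, hs₀, subset_rfl, ?_, ?_⟩
  · intro i hi
    exact contDiffOn_mdot' (hA i (le_of_lt hi)) hmuOn
  · intro s hs
    rw [hrec s hs, mdot_sum_left']
    have hterm : ∀ i, mdot (iteratedDeriv i (mc r v) s • A i s) (muc r v s)
        = mdot (A i s) (muc r v s) * iteratedDeriv i (mc r v) s := fun i => by
      rw [mdot_smul_left']; ring
    rw [Finset.sum_congr rfl fun i _ => hterm i, Finset.sum_range_succ]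
    have hmu1 : mdot (A j s) (muc r v s) = 1 := by
      rw [hAj s hs]
      exact mdot_mcross_self' (hC1 s hs) (hC2 s hs) (hrv s hs)
    rw [hmu1, one_mul]
    ring
end

section
/- Let (r,v) : I → H² × dS² be a spacelike Legendre curve and Q ∈ H²₊. Define φ_Q : H²₊ → ℝ³₁ by φ_Q(x) = −2⟨Q,x⟩x − Q. Then for every s ∈ I: (a) Ort_Q(r)(s) ∈ H²; (b) the orthotomic factors through the pedal: Ort_Q(r)(s) = φ_Q(Ped_Q(r)(s)), i.e. Ort_Q(r)(s) = −2⟨Q, Ped_Q(r)(s)⟩·Ped_Q(r)(s) − Q; equivalently (Ort_Q(r)(s) + Q)/2 = −⟨Q, Ped_Q(r)(s)⟩·Ped_Q(r)(s). -/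
lemma mdot_smul_right (u w : Fin 3 → ℝ) (t : ℝ) : mdot u (t • w) = t * mdot u w := by
  simp [mdot, Pi.smul_apply, smul_eq_mul]; ring

lemma mdot_sub_right (u w1 w2 : Fin 3 → ℝ) : mdot u (w1 - w2) = mdot u w1 - mdot u w2 := by
  simp [mdot, Pi.sub_apply]; ring

/-- the orthotomic lies in `H²` and factors through the pedal:
`Ort_Q(r) = φ_Q ∘ Ped_Q(r)`, i.e. `Ort_Q(r) = −2⟨Q, Ped_Q(r)⟩·Ped_Q(r) − Q`;
equivalently `(Ort_Q(r) + Q)/2 = −⟨Q, Ped_Q(r)⟩·Ped_Q(r)`. -/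
theorem orthotomic_factors_through_pedal
    (I : Set ℝ) (hI : IsOpen I) (r v : ℝ → Fin 3 → ℝ) (Q : Fin 3 → ℝ)
    (h : IsSLegendre I r v) (hQ : Q ∈ H2plus) :
    ∀ s ∈ I,
      Ort Q v s ∈ H2 ∧
      Ort Q v s = (-(2 * mdot Q (Ped Q v s))) • Ped Q v s - Q ∧
      (2 : ℝ)⁻¹ • (Ort Q v s + Q) = (-(mdot Q (Ped Q v s))) • Ped Q v s := by

  intro s hs
  have hvv : mdot (v s) (v s) = 1 := h.2.2.2.1 s hs
  have hQQ : mdot Q Q = -1 := hQ.1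
  set c : ℝ := mdot Q (v s) with hc
  set a : ℝ := Real.sqrt (1 + c ^ 2) with haa
  have hpos : (0:ℝ) < 1 + c ^ 2 := by positivity
  have ha2 : a * a = 1 + c ^ 2 := Real.mul_self_sqrt hpos.le
  have hapos : 0 < a := Real.sqrt_pos.mpr hpos
  have hane : a ≠ 0 := ne_of_gt hapos
  have hQP : mdot Q (Ped Q v s) = -a := by
    have h1 : mdot Q (Ped Q v s) = a⁻¹ * (mdot Q Q - c * c) := by
      show mdot Q (a⁻¹ • (Q - c • v s)) = _
      rw [mdot_smul_right, mdot_sub_right, mdot_smul_right, ← hc]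
    rw [h1, hQQ]
    have : -1 - c * c = -(a * a) := by rw [ha2]; ring
    rw [this]
    field_simp
  have hPed : Ped Q v s = a⁻¹ • (Q - c • v s) := by
    simp [Ped, ← hc, ← haa]
  have hfact : Ort Q v s = (-(2 * mdot Q (Ped Q v s))) • Ped Q v s - Q := by
    rw [hQP, hPed]
    funext i
    simp [Ort, ← hc, Pi.smul_apply, Pi.sub_apply, smul_eq_mul, Pi.add_apply]
    field_simp
    ring
  refine ⟨?_, hfact, ?_⟩
  · show mdot (Ort Q v s) (Ort Q v s) = -1
    have hOrt : ∀ i, Ort Q v s i = Q i - 2 * c * v s i := by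
      intro i; simp [Ort, ← hc, Pi.sub_apply, Pi.smul_apply, smul_eq_mul]
    simp only [mdot, hOrt]
    simp only [mdot] at hQQ hvv hc
    linear_combination hQQ + 4 * c ^ 2 * hvv + 4 * c * hc
  · rw [hfact]
    funext i
    simp [Pi.smul_apply, Pi.sub_apply, Pi.add_apply, smul_eq_mul]
    ring
end
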